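/- Let R be a finite index set, K_r ∈ M_d⊗M_d with blocks K_{r;hh'}, and suppose E(x) = Tr₂(Σ_{r∈R} K_r* x K_r) is D_e-preserving and identity-preserving (E(1⊗1)=1). Define P_{r;m,i} := Σ_{s∈R} (K_{s;mr} K_{s;mr}*)(i,i) for indices r, m, i. Then: (a) every P_{r;m,i} is a nonnegative real number; (b) Σ_{m,i} P_{r;m,i} = 1 for every r (P is a (d×d²)-stochastic matrix); (c) for all m, i: E(E_{mm}⊗E_{ii}) = Σ_r P_{r;m,i} E_{rr}. -/

import Mathlib

open Matrix BigOperators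

/-- Kronecker tensor product of two `d × d` matrices, indexed by `Fin d × Fin d`. -/
noncomputable def mtens {d : ℕ} (A B : Matrix (Fin d) (Fin d) ℂ) :
    Matrix (Fin d × Fin d) (Fin d × Fin d) ℂ :=
  fun p q => A p.1 q.1 * B p.2 q.2

/-- Partial trace over the second tensor factor. -/
noncomputable def ptr2 {d : ℕ} (X : Matrix (Fin d × Fin d) (Fin d × Fin d) ℂ) :
    Matrix (Fin d) (Fin d) ℂ :=
  fun i j => ∑ k, X (i, k) (j, k)

/-- The `(h,h')` block of `K ∈ M_d ⊗ M_d`. -/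
noncomputable def blk {d : ℕ} (K : Matrix (Fin d × Fin d) (Fin d × Fin d) ℂ) (h h' : Fin d) :
    Matrix (Fin d) (Fin d) ℂ :=
  fun a b => K (h, a) (h', b)

/-- The transition expectation `E(x) = Tr₂(Σ_r K_r* x K_r)`. -/
noncomputable def Emap {d : ℕ} {R : Type*} [Fintype R]
    (K : R → Matrix (Fin d × Fin d) (Fin d × Fin d) ℂ)
    (x : Matrix (Fin d × Fin d) (Fin d × Fin d) ℂ) : Matrix (Fin d) (Fin d) ℂ :=
  ptr2 (∑ r, (K r)ᴴ * x * K r)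

/-- `E` is `D_e`-preserving: it maps (tensor products of) diagonal matrices to
diagonal matrices. -/
def DePreserving {d : ℕ} {R : Type*} [Fintype R]
    (K : R → Matrix (Fin d × Fin d) (Fin d × Fin d) ℂ) : Prop :=
  ∀ a b : Matrix (Fin d) (Fin d) ℂ, a.IsDiag → b.IsDiag → (Emap K (mtens a b)).IsDiag

/-- `P_{r;m,i} := Σ_{s∈R} (K_{s;mr} K_{s;mr}*)(i,i)`. -/
noncomputable def Pval {d : ℕ} {R : Type*} [Fintype R]
    (K : R → Matrix (Fin d × Fin d) (Fin d × Fin d) ℂ) (r m i : Fin d) : ℂ :=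
  ∑ s, (blk (K s) m r * (blk (K s) m r)ᴴ) i i

/-!
`P_{r;m,i}` is a sum of diagonal entries of the positive semidefinite matrices
`K_{s;mr} K_{s;mr}*`, and it is the `(r,r)` entry of `E(E_{mm} ⊗ E_{ii})`. Since
`1 ⊗ 1 = Σ_{m,i} E_{mm} ⊗ E_{ii}`, linearity of `E` and `E(1 ⊗ 1) = 1` give the row sums, and
`D_e`-preservation says that `E(E_{mm} ⊗ E_{ii})` is the diagonal matrix with these entries.
-/

section

open scoped Kronecker ComplexOrder

variable {d : ℕ} {R : Type*} [Fintype R]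

lemma mtens_eq_kronecker (A B : Matrix (Fin d) (Fin d) ℂ) : mtens A B = A ⊗ₖ B := rfl

lemma mtens_single_single (m i : Fin d) :
    mtens (single m m 1) (single i i 1) = single (m, i) (m, i) (1 : ℂ) := by
  rw [mtens_eq_kronecker, single_kronecker_single, mul_one]

lemma mtens_one_one :
    mtens (1 : Matrix (Fin d) (Fin d) ℂ) 1 = ∑ m, ∑ i, mtens (single m m 1) (single i i 1) := by
  simp_rw [mtens_single_single]
  rw [← Fintype.sum_prod_type' (fun m i => single (m, i) (m, i) (1 : ℂ)), sum_single_one,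
    mtens_eq_kronecker, one_kronecker_one]

lemma ptr2_sum {ι : Type*} (s : Finset ι) (X : ι → Matrix (Fin d × Fin d) (Fin d × Fin d) ℂ) :
    ptr2 (∑ j ∈ s, X j) = ∑ j ∈ s, ptr2 (X j) := by
  ext a b
  simp only [ptr2, Matrix.sum_apply]
  exact Finset.sum_comm

lemma Emap_sum (K : R → Matrix (Fin d × Fin d) (Fin d × Fin d) ℂ) {ι : Type*} (s : Finset ι)
    (x : ι → Matrix (Fin d × Fin d) (Fin d × Fin d) ℂ) :
    Emap K (∑ j ∈ s, x j) = ∑ j ∈ s, Emap K (x j) := by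
  simp only [Emap, Matrix.mul_sum, Matrix.sum_mul]
  rw [Finset.sum_comm, ptr2_sum]

lemma Emap_single_apply (K : R → Matrix (Fin d × Fin d) (Fin d × Fin d) ℂ)
    (p : Fin d × Fin d) (r r' : Fin d) :
    Emap K (single p p 1) r r' = ∑ s, ∑ a, star (K s p (r, a)) * K s p (r', a) := by
  simp [Emap, ptr2, Matrix.sum_apply, Matrix.mul_apply, Matrix.single, ite_and,
    Finset.sum_comm (γ := R)]

lemma Pval_eq_Emap_apply (K : R → Matrix (Fin d × Fin d) (Fin d × Fin d) ℂ) (r m i : Fin d) :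
    Pval K r m i = Emap K (mtens (single m m 1) (single i i 1)) r r := by
  simp [Pval, blk, mtens_single_single, Emap_single_apply, Matrix.mul_apply, mul_comm]

lemma Pval_nonneg (K : R → Matrix (Fin d × Fin d) (Fin d × Fin d) ℂ) (r m i : Fin d) :
    0 ≤ Pval K r m i :=
  Finset.sum_nonneg fun _ _ => (posSemidef_self_mul_conjTranspose _).diag_nonneg

lemma sum_Pval (K : R → Matrix (Fin d × Fin d) (Fin d × Fin d) ℂ) (r : Fin d) :
    ∑ m, ∑ i, Pval K r m i = Emap K (mtens 1 1) r r := by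
  simp only [Pval_eq_Emap_apply, mtens_one_one, Emap_sum, Matrix.sum_apply]

lemma isDiag_single (m : Fin d) : (single m m (1 : ℂ)).IsDiag :=
  diagonal_single m (1 : ℂ) ▸ isDiag_diagonal _

lemma Emap_single_eq_sum {K : R → Matrix (Fin d × Fin d) (Fin d × Fin d) ℂ}
    (hpres : DePreserving K) (m i : Fin d) :
    Emap K (mtens (single m m 1) (single i i 1)) = ∑ r, Pval K r m i • single r r 1 := by
  simp_rw [smul_single, smul_eq_mul, mul_one, sum_single_eq_diagonal, Pval_eq_Emap_apply]
  exact ((hpres _ _ (isDiag_single m) (isDiag_single i)).diagonal_diag).symm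

end

theorem stmt6_general {d : ℕ} {R : Type*} [Fintype R]
    (K : R → Matrix (Fin d × Fin d) (Fin d × Fin d) ℂ)
    (hpres : DePreserving K)
    (hunit : Emap K (mtens 1 1) = 1) :
    (∀ r m i : Fin d, ∃ t : ℝ, 0 ≤ t ∧ Pval K r m i = (t : ℂ)) ∧
    (∀ r : Fin d, (∑ m, ∑ i, Pval K r m i) = 1) ∧
    (∀ m i : Fin d,
      Emap K (mtens (Matrix.single m m 1) (Matrix.single i i 1)) =
        ∑ r, Pval K r m i • Matrix.single r r 1) := by
  refine ⟨fun r m i => ?_, fun r => ?_, Emap_single_eq_sum hpres⟩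
  · obtain ⟨t, ht, hPt⟩ := RCLike.nonneg_iff_exists_ofReal.mp (Pval_nonneg K r m i)
    exact ⟨t, ht, hPt.symm⟩
  · rw [sum_Pval, hunit, one_apply_eq]

/-- For a `D_e`-preserving identity-preserving transition expectation:
(a) the `P_{r;m,i}` are nonnegative reals, (b) `Σ_{m,i} P_{r;m,i} = 1` for every `r`,
(c) `E(E_{mm} ⊗ E_{ii}) = Σ_r P_{r;m,i} E_{rr}`. -/
theorem stmt6 {d : ℕ} (hd : 1 ≤ d) {R : Type*} [Fintype R]
    (K : R → Matrix (Fin d × Fin d) (Fin d × Fin d) ℂ)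
    (hpres : DePreserving K)
    (hunit : Emap K (mtens 1 1) = 1) :
    (∀ r m i : Fin d, ∃ t : ℝ, 0 ≤ t ∧ Pval K r m i = (t : ℂ)) ∧
    (∀ r : Fin d, (∑ m, ∑ i, Pval K r m i) = 1) ∧
    (∀ m i : Fin d,
      Emap K (mtens (Matrix.single m m 1) (Matrix.single i i 1)) =
        ∑ r, Pval K r m i • Matrix.single r r 1) :=
  stmt6_general K hpres hunit
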